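/- arXiv:math/0404051 — 3 statements merged into one kernel-verified Lean document; each statement's English description precedes it below -/
import Mathlib

section
/- Let k be a commutative ring, V a free k-module of finite rank r, φ an arbitrary k-linear endomorphism of the exterior algebra ⋀V, and δ a k-linear superderivation of ⋀V. Then the generalized supertrace satisfies Tr_Λ([δ,φ]_s) = [δ, Tr_Λ(φ)]_s; precisely, i(Tr_Λ([δ,φ]_s)) = [δ, i(Tr_Λ(φ))]_s as k-linear endomorphisms of ⋀V, where i is the canonical embedding of ⋀V^∨ into End_k(⋀V). -/
/-!
For `x` homogeneous of degree `p`, left multiplication by `x` raises degrees by `p`, so only the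
degree `-p` component of `ψ` contributes to `str (l_x ∘ ψ)`; hence `i (Tr_Λ ψ)` sends `x` to the
scalar `(-1)^p str (l_x ∘ ψ)`. For a superderivation `δ` of parity `b` and `φ` of parity `a`, the
derivation rule `δ ∘ l_x = (-1)^(bp) l_x ∘ δ + l_(δx)` and the symmetry
`str (f ∘ g) = (-1)^(|f||g|) str (g ∘ f)` give `str (l_x ∘ [δ, φ]ₛ) = -(-1)^(bp) str (l_(δx) ∘ φ)`.
On the other side `δ` kills scalars, so `[δ, i (Tr_Λ φ)]ₛ` only keeps the terms `i (Tr_Λ φ) ∘ δ`,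
and evaluating both sides at `x` gives the same scalar.
-/

open ExteriorAlgebra

variable (k : Type*) [CommRing k] (V : Type*) [AddCommGroup V] [Module k V]

-- the grading involution ε : +1 on even part, −1 on odd part
noncomputable def eps : ExteriorAlgebra k V →ₐ[k] ExteriorAlgebra k V :=
  ExteriorAlgebra.lift k ⟨-(ExteriorAlgebra.ι k (M := V)), fun m => by
    simp [ExteriorAlgebra.ι_sq_zero]⟩

-- the supertrace
noncomputable def strs (φ : Module.End k (ExteriorAlgebra k V)) : k :=
  LinearMap.trace k _ ((eps k V).toLinearMap ∘ₗ φ)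

-- projection onto the degree-n graded component
noncomputable def pr (n : ℕ) : ExteriorAlgebra k V →ₗ[k] ⋀[k]^n V :=
  (DirectSum.component k ℕ (fun i => (⋀[k]^i V : Submodule k (ExteriorAlgebra k V))) n) ∘ₗ
    (DirectSum.decomposeLinearEquiv (fun i : ℕ => (⋀[k]^i V : Submodule k (ExteriorAlgebra k V)))).toLinearMap

noncomputable def prEnd (n : ℕ) : Module.End k (ExteriorAlgebra k V) :=
  (Submodule.subtype _) ∘ₗ pr k V n

-- the degree-d homogeneous component of an endomorphism
noncomputable def cpt (d : ℤ) (φ : Module.End k (ExteriorAlgebra k V)) :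
    Module.End k (ExteriorAlgebra k V) :=
  ∑ m ∈ Finset.range (Module.finrank k V + 1),
    if 0 ≤ (m : ℤ) + d then prEnd k V ((m : ℤ) + d).toNat ∘ₗ φ ∘ₗ prEnd k V m else 0

-- generalized supertrace of a degree-(−n) homogeneous endomorphism
noncomputable def TrHom (n : ℕ) (φ : Module.End k (ExteriorAlgebra k V)) :
    Module.Dual k (⋀[k]^n V) where
  toFun η := (-1 : k) ^ n * strs k V ((LinearMap.mulLeft k (η : ExteriorAlgebra k V)) ∘ₗ φ)
  map_add' x y := by
    have h : ∀ a b : ExteriorAlgebra k V, LinearMap.mulLeft k (a + b) =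
        LinearMap.mulLeft k a + LinearMap.mulLeft k b := fun a b => by
      ext z; simp [add_mul]
    simp [h, strs, LinearMap.comp_add, LinearMap.add_comp, mul_add]
  map_smul' c x := by
    have h : ∀ (c : k) (a : ExteriorAlgebra k V), LinearMap.mulLeft k (c • a) =
        c • LinearMap.mulLeft k a := fun c a => by
      ext z; simp [smul_mul_assoc]
    simp [h, strs, LinearMap.comp_smul, LinearMap.smul_comp]
    ring

-- generalized supertrace of an arbitrary endomorphism, at level n
noncomputable def TrGen (n : ℕ) (φ : Module.End k (ExteriorAlgebra k V)) :
    Module.Dual k (⋀[k]^n V) :=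
  TrHom k V n (cpt k V (-(n : ℤ)) φ)

-- the embedding i : ⋀ V^∨ → End(⋀ V)
noncomputable def iEmb (n : ℕ) (α : Module.Dual k (⋀[k]^n V)) :
    Module.End k (ExteriorAlgebra k V) :=
  (Algebra.linearMap k (ExteriorAlgebra k V)) ∘ₗ α ∘ₗ pr k V n

-- i ∘ Tr_Λ as a single endomorphism, and its even/odd parts
noncomputable def iTr (φ : Module.End k (ExteriorAlgebra k V)) :
    Module.End k (ExteriorAlgebra k V) :=
  ∑ n ∈ Finset.range (Module.finrank k V + 1), iEmb k V n (TrGen k V n φ)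

noncomputable def iTrEven (φ : Module.End k (ExteriorAlgebra k V)) :
    Module.End k (ExteriorAlgebra k V) :=
  ∑ n ∈ Finset.range (Module.finrank k V + 1),
    if Even n then iEmb k V n (TrGen k V n φ) else 0

noncomputable def iTrOdd (φ : Module.End k (ExteriorAlgebra k V)) :
    Module.End k (ExteriorAlgebra k V) :=
  ∑ n ∈ Finset.range (Module.finrank k V + 1),
    if ¬ Even n then iEmb k V n (TrGen k V n φ) else 0

-- parity submodules
noncomputable def evenSub : Submodule k (ExteriorAlgebra k V) :=
  ⨆ n : ℕ, ⋀[k]^(2 * n) V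

noncomputable def oddSub : Submodule k (ExteriorAlgebra k V) :=
  ⨆ n : ℕ, ⋀[k]^(2 * n + 1) V

def IsEvenMap (f : Module.End k (ExteriorAlgebra k V)) : Prop :=
  (∀ x ∈ evenSub k V, f x ∈ evenSub k V) ∧ (∀ x ∈ oddSub k V, f x ∈ oddSub k V)

def IsOddMap (f : Module.End k (ExteriorAlgebra k V)) : Prop :=
  (∀ x ∈ evenSub k V, f x ∈ oddSub k V) ∧ (∀ x ∈ oddSub k V, f x ∈ evenSub k V)

def IsEvenDeriv (δ : Module.End k (ExteriorAlgebra k V)) : Prop :=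
  IsEvenMap k V δ ∧ ∀ x y : ExteriorAlgebra k V, δ (x * y) = δ x * y + x * δ y

def IsOddDeriv (δ : Module.End k (ExteriorAlgebra k V)) : Prop :=
  IsOddMap k V δ ∧
  (∀ x ∈ evenSub k V, ∀ y : ExteriorAlgebra k V, δ (x * y) = δ x * y + x * δ y) ∧
  (∀ x ∈ oddSub k V, ∀ y : ExteriorAlgebra k V, δ (x * y) = δ x * y - x * δ y)

-- supercommutator of parity-decomposed endomorphisms, [a₀+a₁, b₀+b₁]ₛ
def sComm (a₀ a₁ b₀ b₁ : Module.End k (ExteriorAlgebra k V)) :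
    Module.End k (ExteriorAlgebra k V) :=
  (a₀ * b₀ - b₀ * a₀) + (a₀ * b₁ - b₁ * a₀) + (a₁ * b₀ - b₀ * a₁) + (a₁ * b₁ + b₁ * a₁)

def IsHomogeneousOfDegree (d : ℤ) (φ : Module.End k (ExteriorAlgebra k V)) : Prop :=
  ∀ m : ℕ, ∀ x ∈ ⋀[k]^m V,
    (∀ m' : ℕ, (m' : ℤ) = (m : ℤ) + d → φ x ∈ ⋀[k]^m' V) ∧ ((m : ℤ) + d < 0 → φ x = 0)

section

variable {k V}

local notation "ε" => AlgHom.toLinearMap (eps k V)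
local notation "L" => LinearMap.mulLeft k

lemma prEnd_of_mem {n : ℕ} {x : ExteriorAlgebra k V} (hx : x ∈ ⋀[k]^n V) :
    prEnd k V n x = x :=
  DirectSum.decompose_of_mem_same (fun i : ℕ => (⋀[k]^i V : Submodule k (ExteriorAlgebra k V))) hx

lemma prEnd_of_mem_of_ne {m n : ℕ} {x : ExteriorAlgebra k V} (hx : x ∈ ⋀[k]^n V) (h : m ≠ n) :
    prEnd k V m x = 0 :=
  DirectSum.decompose_of_mem_ne (fun i : ℕ => (⋀[k]^i V : Submodule k (ExteriorAlgebra k V))) hx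
    h.symm

lemma prEnd_mem (n : ℕ) (x : ExteriorAlgebra k V) : prEnd k V n x ∈ ⋀[k]^n V :=
  SetLike.coe_mem _

lemma prEnd_mul_prEnd_self (n : ℕ) : prEnd k V n * prEnd k V n = prEnd k V n :=
  LinearMap.ext fun x => prEnd_of_mem (prEnd_mem n x)

lemma ext_of_mem_exteriorPower {f g : Module.End k (ExteriorAlgebra k V)}
    (h : ∀ p : ℕ, ∀ x ∈ ⋀[k]^p V, f x = g x) : f = g :=
  LinearMap.ext <| DirectSum.Decomposition.inductionOn
    (fun i : ℕ => (⋀[k]^i V : Submodule k (ExteriorAlgebra k V))) (by simp)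
    (fun x => h _ _ x.2) (fun x y hx hy => by simp [hx, hy])

lemma eps_of_mem {n : ℕ} {x : ExteriorAlgebra k V} (hx : x ∈ ⋀[k]^n V) :
    eps k V x = (-1 : k) ^ n • x := by
  induction hx using Submodule.pow_induction_on_left' with
  | algebraMap r => simp
  | add x y i _ _ ihx ihy => rw [map_add, ihx, ihy, smul_add]
  | mem_mul m hm i x _ ih =>
      obtain ⟨v, rfl⟩ := hm
      rw [map_mul, ih, eps, ExteriorAlgebra.lift_ι_apply, mul_smul_comm, pow_succ', mul_smul]
      simp

lemma eps_mul_prEnd (n : ℕ) : ε * prEnd k V n = prEnd k V n * ε :=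
  ext_of_mem_exteriorPower fun p x hx => by
    rcases eq_or_ne n p with rfl | hnp
    · simp [prEnd_of_mem hx, eps_of_mem hx, prEnd_of_mem (Submodule.smul_mem _ _ hx)]
    · simp [prEnd_of_mem_of_ne hx hnp, eps_of_mem hx]

lemma prEnd_mul_mulLeft {m n : ℕ} {η : ExteriorAlgebra k V} (hη : η ∈ ⋀[k]^n V) :
    prEnd k V m * L η = if n ≤ m then L η * prEnd k V (m - n) else 0 :=
  ext_of_mem_exteriorPower fun j y hy => by
    have hηy : η * y ∈ ⋀[k]^(n + j) V := SetLike.mul_mem_graded hη hy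
    by_cases hm : m = n + j
    · subst hm
      simp [prEnd_of_mem hηy, prEnd_of_mem hy]
    · split_ifs
      · simp [prEnd_of_mem_of_ne hηy hm, prEnd_of_mem_of_ne hy (show m - n ≠ j by omega)]
      · simp [prEnd_of_mem_of_ne hηy hm]

section FiniteRank

variable [Module.Free k V] [Module.Finite k V]

lemma exteriorPower_eq_bot_of_finrank_lt {n : ℕ} (hn : Module.finrank k V < n) :
    (⋀[k]^n V : Submodule k (ExteriorAlgebra k V)) = ⊥ := by
  nontriviality k
  have : Subsingleton (⋀[k]^n V) := (Module.finrank_eq_zero_iff_of_free k _).mp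
    (by rw [exteriorPower.finrank_eq, Nat.choose_eq_zero_of_lt hn])
  exact Submodule.eq_bot_of_subsingleton

lemma sum_prEnd : ∑ n ∈ Finset.range (Module.finrank k V + 1), prEnd k V n = 1 := by
  refine ext_of_mem_exteriorPower fun p x hx => ?_
  rw [LinearMap.coe_sum, Finset.sum_apply, Module.End.one_apply]
  by_cases hp : p < Module.finrank k V + 1
  · rw [Finset.sum_eq_single_of_mem p (Finset.mem_range.mpr hp)
      (fun n _ hn => prEnd_of_mem_of_ne hx hn), prEnd_of_mem hx]
  · have hx0 : x = 0 := by
      rwa [exteriorPower_eq_bot_of_finrank_lt (by omega), Submodule.mem_bot] at hx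
    simp [hx0]

lemma sum_prEnd_apply (x : ExteriorAlgebra k V) :
    ∑ n ∈ Finset.range (Module.finrank k V + 1), prEnd k V n x = x := by
  simpa using congr($(sum_prEnd (k := k) (V := V)) x)

end FiniteRank

lemma exteriorPower_le_evenSub {n : ℕ} (hn : Even n) :
    (⋀[k]^n V : Submodule k (ExteriorAlgebra k V)) ≤ evenSub k V := by
  obtain ⟨m, rfl⟩ := hn
  exact le_iSup_of_le m (by rw [two_mul])

lemma exteriorPower_le_oddSub {n : ℕ} (hn : ¬ Even n) :
    (⋀[k]^n V : Submodule k (ExteriorAlgebra k V)) ≤ oddSub k V := by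
  obtain ⟨m, rfl⟩ := Nat.not_even_iff_odd.mp hn
  exact le_iSup_of_le m le_rfl

lemma prEnd_eq_zero_of_mem_evenSub {n : ℕ} (hn : ¬ Even n) {x : ExteriorAlgebra k V}
    (hx : x ∈ evenSub k V) : prEnd k V n x = 0 := by
  induction hx using Submodule.iSup_induction' with
  | mem m y hy => exact prEnd_of_mem_of_ne hy (by rintro rfl; exact hn (even_two_mul m))
  | zero => exact map_zero _
  | add y z _ _ hy hz => rw [map_add, hy, hz, add_zero]

lemma prEnd_eq_zero_of_mem_oddSub {n : ℕ} (hn : Even n) {x : ExteriorAlgebra k V}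
    (hx : x ∈ oddSub k V) : prEnd k V n x = 0 := by
  induction hx using Submodule.iSup_induction' with
  | mem m y hy =>
    exact prEnd_of_mem_of_ne hy (by rintro rfl; exact Nat.not_even_two_mul_add_one m hn)
  | zero => exact map_zero _
  | add y z _ _ hy hz => rw [map_add, hy, hz, add_zero]

-- Parity is read off the graded components rather than from `ε`, which is the identity in
-- characteristic 2.
def HasParity (a : ℕ) (f : Module.End k (ExteriorAlgebra k V)) : Prop :=
  ∀ ⦃i j : ℕ⦄ ⦃x : ExteriorAlgebra k V⦄, x ∈ ⋀[k]^j V → ¬ Even (i + j + a) →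
    prEnd k V i (f x) = 0

lemma IsEvenMap.hasParity {f : Module.End k (ExteriorAlgebra k V)} (hf : IsEvenMap k V f) :
    HasParity 0 f := by
  intro i j x hx hij
  by_cases hj : Even j
  · exact prEnd_eq_zero_of_mem_evenSub (by grind) (hf.1 x (exteriorPower_le_evenSub hj hx))
  · exact prEnd_eq_zero_of_mem_oddSub (by grind) (hf.2 x (exteriorPower_le_oddSub hj hx))

lemma IsOddMap.hasParity {f : Module.End k (ExteriorAlgebra k V)} (hf : IsOddMap k V f) :
    HasParity 1 f := by
  intro i j x hx hij
  by_cases hj : Even j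
  · exact prEnd_eq_zero_of_mem_oddSub (by grind) (hf.1 x (exteriorPower_le_evenSub hj hx))
  · exact prEnd_eq_zero_of_mem_evenSub (by grind) (hf.2 x (exteriorPower_le_oddSub hj hx))

lemma hasParity_mulLeft {p : ℕ} {x : ExteriorAlgebra k V} (hx : x ∈ ⋀[k]^p V) :
    HasParity p (L x) := fun i j y hy hij =>
  prEnd_of_mem_of_ne (SetLike.mul_mem_graded hx hy) (by rintro rfl; grind)

lemma HasParity.mul [Module.Free k V] [Module.Finite k V] {a b : ℕ}
    {f g : Module.End k (ExteriorAlgebra k V)} (hf : HasParity a f) (hg : HasParity b g) :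
    HasParity (a + b) (f * g) := by
  intro i j x hx hij
  rw [Module.End.mul_apply, ← sum_prEnd_apply (g x), map_sum, map_sum]
  refine Finset.sum_eq_zero fun m _ => ?_
  by_cases hm : Even (m + j + b)
  · exact hf (prEnd_mem m _) (by grind)
  · rw [hg hx hm, map_zero, map_zero]

lemma HasParity.eps_apply [Module.Free k V] [Module.Finite k V] {a j : ℕ}
    {f : Module.End k (ExteriorAlgebra k V)} (hf : HasParity a f) {x : ExteriorAlgebra k V}
    (hx : x ∈ ⋀[k]^j V) : eps k V (f x) = (-1 : k) ^ (j + a) • f x := by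
  conv_lhs => rw [← sum_prEnd_apply (f x)]
  conv_rhs => rw [← sum_prEnd_apply (f x), Finset.smul_sum]
  rw [map_sum]
  refine Finset.sum_congr rfl fun i _ => ?_
  by_cases hi : Even (i + j + a)
  · rw [eps_of_mem (prEnd_mem i _), neg_one_pow_congr (show Even i ↔ Even (j + a) by grind)]
  · rw [hf hx hi, map_zero, smul_zero]

lemma HasParity.mul_eps [Module.Free k V] [Module.Finite k V] {a : ℕ}
    {f : Module.End k (ExteriorAlgebra k V)} (hf : HasParity a f) :
    f * ε = (-1 : k) ^ a • (ε * f) :=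
  ext_of_mem_exteriorPower fun j x hx => by
    simp only [Module.End.mul_apply, AlgHom.toLinearMap_apply, LinearMap.smul_apply,
      eps_of_mem hx, hf.eps_apply hx, map_smul, smul_smul, ← pow_add]
    rw [neg_one_pow_congr (show Even j ↔ Even (a + (j + a)) by grind)]

lemma strs_eq_trace (f : Module.End k (ExteriorAlgebra k V)) :
    strs k V f = LinearMap.trace k _ (ε * f) :=
  rfl

lemma strs_add (f g : Module.End k (ExteriorAlgebra k V)) :
    strs k V (f + g) = strs k V f + strs k V g := by
  simp only [strs_eq_trace, mul_add, map_add]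

lemma strs_sub (f g : Module.End k (ExteriorAlgebra k V)) :
    strs k V (f - g) = strs k V f - strs k V g := by
  simp only [strs_eq_trace, mul_sub, map_sub]

lemma strs_smul (c : k) (f : Module.End k (ExteriorAlgebra k V)) :
    strs k V (c • f) = c * strs k V f := by
  simp only [strs_eq_trace, mul_smul_comm, map_smul, smul_eq_mul]

noncomputable def strsMulLeft (ψ : Module.End k (ExteriorAlgebra k V)) :
    ExteriorAlgebra k V →ₗ[k] k :=
  LinearMap.trace k _ ∘ₗ LinearMap.mulLeft k ε ∘ₗ LinearMap.mulRight k ψ ∘ₗ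
    LinearMap.mul k _

lemma strsMulLeft_apply (ψ : Module.End k (ExteriorAlgebra k V)) (y : ExteriorAlgebra k V) :
    strsMulLeft ψ y = strs k V (L y * ψ) :=
  rfl

lemma strsMulLeft_add (ψ χ : Module.End k (ExteriorAlgebra k V)) :
    strsMulLeft (ψ + χ) = strsMulLeft ψ + strsMulLeft χ :=
  LinearMap.ext fun y => by
    simp only [strsMulLeft_apply, LinearMap.add_apply, mul_add, strs_add]

section FiniteRank

variable [Module.Free k V] [Module.Finite k V]

lemma strs_eq_sum_prEnd (f : Module.End k (ExteriorAlgebra k V)) :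
    strs k V f = ∑ n ∈ Finset.range (Module.finrank k V + 1),
      strs k V (prEnd k V n * f * prEnd k V n) := by
  conv_lhs => rw [← mul_one f, ← sum_prEnd, Finset.mul_sum]
  simp only [strs_eq_trace, Finset.mul_sum, map_sum]
  refine Finset.sum_congr rfl fun n _ => ?_
  calc LinearMap.trace k _ (ε * (f * prEnd k V n))
      = LinearMap.trace k _ (ε * f * prEnd k V n * prEnd k V n) := by
        rw [mul_assoc _ (prEnd k V n), prEnd_mul_prEnd_self, mul_assoc]
    _ = LinearMap.trace k _ (prEnd k V n * (ε * f * prEnd k V n)) := LinearMap.trace_mul_comm ..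
    _ = LinearMap.trace k _ (ε * (prEnd k V n * f * prEnd k V n)) := by
        rw [← mul_assoc, ← mul_assoc, ← eps_mul_prEnd, mul_assoc ε, mul_assoc ε, mul_assoc]

lemma HasParity.strs_eq_zero {a : ℕ} {f : Module.End k (ExteriorAlgebra k V)}
    (hf : HasParity a f) (ha : ¬ Even a) : strs k V f = 0 := by
  rw [strs_eq_sum_prEnd]
  refine Finset.sum_eq_zero fun n _ => ?_
  have hblock : prEnd k V n * f * prEnd k V n = 0 :=
    LinearMap.ext fun y => hf (prEnd_mem n y) (by grind)
  rw [hblock, strs_eq_trace, mul_zero, map_zero]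

lemma HasParity.strs_mul_comm {a b : ℕ} {f g : Module.End k (ExteriorAlgebra k V)}
    (hf : HasParity a f) (hg : HasParity b g) :
    strs k V (f * g) = (-1 : k) ^ (a * b) * strs k V (g * f) := by
  by_cases hab : Even (a + b)
  · have hsign : (-1 : k) ^ (a * b) = (-1) ^ a := neg_one_pow_congr (by grind)
    calc strs k V (f * g) = (-1 : k) ^ a * ((-1) ^ a * strs k V (f * g)) := by
          rw [← mul_assoc, ← pow_add, Even.neg_one_pow ⟨a, rfl⟩, one_mul]
      _ = (-1 : k) ^ a * LinearMap.trace k _ (f * ε * g) := by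
          rw [hf.mul_eps, smul_mul_assoc, map_smul, strs_eq_trace, mul_assoc, smul_eq_mul]
      _ = (-1 : k) ^ (a * b) * strs k V (g * f) := by
          rw [hsign, mul_assoc, LinearMap.trace_mul_comm, strs_eq_trace, mul_assoc]
  · rw [(hf.mul hg).strs_eq_zero hab, (hg.mul hf).strs_eq_zero (by rwa [add_comm]), mul_zero]

lemma TrGen_apply {n : ℕ} (ψ : Module.End k (ExteriorAlgebra k V)) (η : ⋀[k]^n V) :
    TrGen k V n ψ η = (-1 : k) ^ n * strs k V (L (η : ExteriorAlgebra k V) * ψ) := by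
  change (-1 : k) ^ n * strs k V (L (η : ExteriorAlgebra k V) * cpt k V (-n) ψ) = _
  congr 1
  simp only [strs_eq_sum_prEnd (L (η : ExteriorAlgebra k V) * ψ), cpt, strs_eq_trace,
    Finset.mul_sum, map_sum]
  refine Finset.sum_congr rfl fun m _ => ?_
  rw [← mul_assoc (prEnd k V m), prEnd_mul_mulLeft η.2]
  by_cases hnm : n ≤ m
  · rw [if_pos hnm, if_pos (by omega), show ((m : ℤ) + -n).toNat = m - n by omega]
    simp only [Module.End.mul_eq_comp, LinearMap.comp_assoc]
  · rw [if_neg hnm, if_neg (by omega)]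
    simp

end FiniteRank

def IsSuperDerivation (b : ℕ) (δ : Module.End k (ExteriorAlgebra k V)) : Prop :=
  HasParity b δ ∧ ∀ ⦃p : ℕ⦄ ⦃x : ExteriorAlgebra k V⦄, x ∈ ⋀[k]^p V →
    ∀ y, δ (x * y) = δ x * y + (-1 : k) ^ (b * p) • (x * δ y)

lemma IsEvenDeriv.isSuperDerivation {δ : Module.End k (ExteriorAlgebra k V)}
    (hδ : IsEvenDeriv k V δ) : IsSuperDerivation 0 δ :=
  ⟨hδ.1.hasParity, fun p x _ y => by rw [hδ.2, zero_mul, pow_zero, one_smul]⟩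

lemma IsOddDeriv.isSuperDerivation {δ : Module.End k (ExteriorAlgebra k V)}
    (hδ : IsOddDeriv k V δ) : IsSuperDerivation 1 δ := by
  refine ⟨hδ.1.hasParity, fun p x hx y => ?_⟩
  by_cases hp : Even p
  · rw [hδ.2.1 x (exteriorPower_le_evenSub hp hx), one_mul, hp.neg_one_pow, one_smul]
  · rw [hδ.2.2 x (exteriorPower_le_oddSub hp hx), one_mul,
      (Nat.not_even_iff_odd.mp hp).neg_one_pow, neg_one_smul, sub_eq_add_neg]

namespace IsSuperDerivation

variable {b : ℕ} {δ : Module.End k (ExteriorAlgebra k V)}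

lemma mul_mulLeft (hδ : IsSuperDerivation b δ) {p : ℕ} {x : ExteriorAlgebra k V}
    (hx : x ∈ ⋀[k]^p V) : δ * L x = (-1 : k) ^ (b * p) • (L x * δ) + L (δ x) :=
  LinearMap.ext fun y => by
    simp [hδ.2 hx y, add_comm]

lemma map_algebraMap (hδ : IsSuperDerivation b δ) (c : k) :
    δ (algebraMap k (ExteriorAlgebra k V) c) = 0 := by
  have hone : δ 1 = δ 1 + δ 1 := by
    have h1 : (1 : ExteriorAlgebra k V) ∈ ⋀[k]^0 V := Submodule.one_le.mp (pow_zero _).ge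
    simpa using hδ.2 h1 1
  rw [Algebra.algebraMap_eq_smul_one, map_smul, left_eq_add.mp hone, smul_zero]

lemma mul_iEmb (hδ : IsSuperDerivation b δ) (n : ℕ) (α : Module.Dual k (⋀[k]^n V)) :
    δ * iEmb k V n α = 0 :=
  LinearMap.ext fun _ => hδ.map_algebraMap _

theorem strsMulLeft_supercommutator [Module.Free k V] [Module.Finite k V]
    (hδ : IsSuperDerivation b δ) {a : ℕ} {φ : Module.End k (ExteriorAlgebra k V)}
    (hφ : HasParity a φ) {p : ℕ} {x : ExteriorAlgebra k V} (hx : x ∈ ⋀[k]^p V) :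
    strsMulLeft (δ * φ - (-1 : k) ^ (a * b) • (φ * δ)) x =
      -((-1 : k) ^ (b * p) * strsMulLeft φ (δ x)) := by
  rw [strsMulLeft_apply, strsMulLeft_apply]
  set s := (-1 : k) ^ (b * p)
  have hs : s * s = 1 := by rw [← pow_add, Even.neg_one_pow ⟨_, rfl⟩]
  have hLδ : L x * δ = s • (δ * L x) - s • L (δ x) := by
    rw [hδ.mul_mulLeft hx, smul_add, smul_smul, hs, one_smul, add_sub_cancel_right]
  have hcomm : strs k V (δ * (L x * φ)) = (-1) ^ (b * (p + a)) * strs k V (L x * φ * δ) :=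
    hδ.1.strs_mul_comm ((hasParity_mulLeft hx).mul hφ)
  have hsign : s * (-1) ^ (b * (p + a)) = (-1 : k) ^ (a * b) := by
    rw [← pow_add, show b * p + b * (p + a) = 2 * (b * p) + a * b by ring, pow_add, pow_mul,
      neg_one_sq, one_pow, one_mul]
  calc strs k V (L x * (δ * φ - (-1 : k) ^ (a * b) • (φ * δ)))
      = strs k V (L x * δ * φ) - (-1 : k) ^ (a * b) * strs k V (L x * φ * δ) := by
        rw [mul_sub, strs_sub, mul_smul_comm, strs_smul, mul_assoc, mul_assoc]
    _ = s * strs k V (δ * (L x * φ)) - s * strs k V (L (δ x) * φ)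
          - (-1 : k) ^ (a * b) * strs k V (L x * φ * δ) := by
        rw [hLδ, sub_mul, strs_sub, smul_mul_assoc, smul_mul_assoc, strs_smul, strs_smul,
          mul_assoc]
    _ = -(s * strs k V (L (δ x) * φ)) := by
        rw [hcomm, ← mul_assoc, hsign]
        ring

lemma mul_iTrEven (hδ : IsSuperDerivation b δ) (ψ : Module.End k (ExteriorAlgebra k V)) :
    δ * iTrEven k V ψ = 0 := by
  simp only [iTrEven, Finset.mul_sum, mul_ite, hδ.mul_iEmb, mul_zero, ite_self,
    Finset.sum_const_zero]

lemma mul_iTrOdd (hδ : IsSuperDerivation b δ) (ψ : Module.End k (ExteriorAlgebra k V)) :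
    δ * iTrOdd k V ψ = 0 := by
  simp only [iTrOdd, Finset.mul_sum, mul_ite, hδ.mul_iEmb, mul_zero, ite_self,
    Finset.sum_const_zero]

end IsSuperDerivation

lemma sComm_of_mul_eq_zero {a₀ a₁ b₀ b₁ : Module.End k (ExteriorAlgebra k V)}
    (h₀₀ : a₀ * b₀ = 0) (h₀₁ : a₀ * b₁ = 0) (h₁₀ : a₁ * b₀ = 0)
    (h₁₁ : a₁ * b₁ = 0) :
    sComm k V a₀ a₁ b₀ b₁ = -((b₀ + b₁) * a₀) - (b₀ - b₁) * a₁ := by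
  rw [sComm, h₀₀, h₀₁, h₁₀, h₁₁, add_mul, sub_mul]
  abel

lemma iTrEven_add_iTrOdd (ψ : Module.End k (ExteriorAlgebra k V)) :
    iTrEven k V ψ + iTrOdd k V ψ = iTr k V ψ := by
  simp only [iTrEven, iTrOdd, iTr, ← Finset.sum_add_distrib]
  exact Finset.sum_congr rfl fun n _ => by split_ifs <;> simp

section FiniteRank

variable [Module.Free k V] [Module.Finite k V]

lemma iEmb_TrGen_apply (n : ℕ) (ψ : Module.End k (ExteriorAlgebra k V))
    (y : ExteriorAlgebra k V) :
    iEmb k V n (TrGen k V n ψ) y =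
      algebraMap k _ ((-1 : k) ^ n * strsMulLeft ψ (prEnd k V n y)) :=
  congrArg (algebraMap k _) (TrGen_apply ψ _)

lemma iTr_apply (ψ : Module.End k (ExteriorAlgebra k V)) (y : ExteriorAlgebra k V) :
    iTr k V ψ y = algebraMap k _ (strsMulLeft ψ (eps k V y)) := by
  conv_rhs => rw [← sum_prEnd_apply y]
  simp only [iTr, LinearMap.coe_sum, Finset.sum_apply, iEmb_TrGen_apply, map_sum,
    eps_of_mem (prEnd_mem _ _), map_smul, smul_eq_mul]

lemma iTrEven_sub_iTrOdd_apply (ψ : Module.End k (ExteriorAlgebra k V))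
    (y : ExteriorAlgebra k V) :
    (iTrEven k V ψ - iTrOdd k V ψ) y = algebraMap k _ (strsMulLeft ψ y) := by
  conv_rhs => rw [← sum_prEnd_apply y]
  simp only [iTrEven, iTrOdd, ← Finset.sum_sub_distrib, LinearMap.coe_sum, Finset.sum_apply,
    map_sum]
  refine Finset.sum_congr rfl fun n _ => ?_
  by_cases hn : Even n
  · simp [hn, iEmb_TrGen_apply, hn.neg_one_pow]
  · simp [hn, iEmb_TrGen_apply, (Nat.not_even_iff_odd.mp hn).neg_one_pow]

end FiniteRank

end

theorem generalized_supertrace_of_supercommutator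
    [Module.Free k V] [Module.Finite k V]
    (δ₀ δ₁ φ₀ φ₁ : Module.End k (ExteriorAlgebra k V))
    (hδ₀ : IsEvenDeriv k V δ₀) (hδ₁ : IsOddDeriv k V δ₁)
    (hφ₀ : IsEvenMap k V φ₀) (hφ₁ : IsOddMap k V φ₁) :
    iTr k V (sComm k V δ₀ δ₁ φ₀ φ₁) =
      sComm k V δ₀ δ₁ (iTrEven k V (φ₀ + φ₁)) (iTrOdd k V (φ₀ + φ₁)) := by
  have hδ₀' := hδ₀.isSuperDerivation
  have hδ₁' := hδ₁.isSuperDerivation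
  have hLHS : sComm k V δ₀ δ₁ φ₀ φ₁ =
      (δ₀ * φ₀ - (-1 : k) ^ (0 * 0) • (φ₀ * δ₀)) +
        (δ₀ * φ₁ - (-1 : k) ^ (1 * 0) • (φ₁ * δ₀)) +
        (δ₁ * φ₀ - (-1 : k) ^ (0 * 1) • (φ₀ * δ₁)) +
        (δ₁ * φ₁ - (-1 : k) ^ (1 * 1) • (φ₁ * δ₁)) := by
    simp only [sComm, mul_zero, mul_one, pow_zero, pow_one, one_smul]
    rw [neg_one_smul k (φ₁ * δ₁), sub_neg_eq_add]
  rw [hLHS, sComm_of_mul_eq_zero (hδ₀'.mul_iTrEven _) (hδ₀'.mul_iTrOdd _) (hδ₁'.mul_iTrEven _)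
    (hδ₁'.mul_iTrOdd _), iTrEven_add_iTrOdd]
  refine ext_of_mem_exteriorPower fun p x hx => ?_
  have hsq : (-1 : k) ^ p * (-1) ^ p = 1 := by rw [← pow_add, Even.neg_one_pow ⟨p, rfl⟩]
  rw [LinearMap.sub_apply, LinearMap.neg_apply, Module.End.mul_apply, Module.End.mul_apply,
    iTr_apply, iTr_apply, iTrEven_sub_iTrOdd_apply, eps_of_mem hx, hδ₀'.1.eps_apply hx,
    ← map_neg, ← map_sub]
  congr 1
  simp only [map_smul, smul_eq_mul, strsMulLeft_add, LinearMap.add_apply,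
    hδ₀'.strsMulLeft_supercommutator hφ₀.hasParity hx,
    hδ₀'.strsMulLeft_supercommutator hφ₁.hasParity hx,
    hδ₁'.strsMulLeft_supercommutator hφ₀.hasParity hx,
    hδ₁'.strsMulLeft_supercommutator hφ₁.hasParity hx]
  linear_combination (-(strsMulLeft φ₀ (δ₁ x) + strsMulLeft φ₁ (δ₁ x))) * hsq
end

section
/- Let k be a commutative ring and V a free k-module of finite rank r ≥ 2. For any τ ∈ V^∨, the generalized supertrace of the contraction operator ι_τ on ⋀V (the odd superderivation of degree −1 extending τ: V → k) is zero: Tr_Λ(ι_τ) = 0. -/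
open ExteriorAlgebra

variable (k : Type*) [CommRing k] (V : Type*) [AddCommGroup V] [Module k V]

/-!
Transported along `V ≅ ⋀¹V`, the generalized supertrace of `ι_τ` is the linear form
`S(w) = -str(l_w ∘ ι_τ)`. Moving `ι_σ` around `ε ∘ l_v ∘ l_w ∘ ι_τ` by cyclicity of the trace,
using that `ι_σ` anticommutes with `ε` and with `ι_τ` and that `ι_σ l_v + l_v ι_σ = σ(v)`, yields
`σ(v) S(w) = σ(w) S(v)` for all `σ, v, w`. Taking `σ` a coordinate form of a basis and `v ≠ w`
basis vectors, possible only in rank at least two, forces `S = 0`.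
-/

open CliffordAlgebra (contractLeft)
open LinearMap (mulLeft)

theorem Module.Dual.eq_zero_of_forall_mul_apply_symm {R M : Type*} [CommRing R] [AddCommGroup M]
    [Module R M] [Module.Free R M] (hM : 1 < Module.finrank R M) (f : Module.Dual R M)
    (hf : ∀ (g : Module.Dual R M) (v w : M), g v * f w = g w * f v) : f = 0 := by
  cases subsingleton_or_nontrivial R with
  | inl _ => exact Subsingleton.elim _ _
  | inr _ =>
  have : Module.Finite R M := Module.finite_of_finrank_pos (by omega)
  let b := Module.Free.chooseBasis R M
  have hcard : 1 < Fintype.card (Module.Free.ChooseBasisIndex R M) :=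
    Module.finrank_eq_card_chooseBasisIndex R M ▸ hM
  refine b.ext fun i => ?_
  obtain ⟨j, hji⟩ := Fintype.exists_ne_of_one_lt_card hcard i
  simpa [b.coord_apply, Finsupp.single_apply, hji] using hf (b.coord j) (b j) (b i)

section Contraction

variable {k V}

lemma eps_ι (v : V) : eps k V (ι k v) = -ι k v := by
  rw [eps, ExteriorAlgebra.lift_ι_apply]
  rfl

lemma eps_contractLeft (τ : Module.Dual k V) (x : ExteriorAlgebra k V) :
    eps k V (contractLeft τ x) = -contractLeft τ (eps k V x) := by
  induction x using CliffordAlgebra.left_induction with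
  | algebraMap r => simp [CliffordAlgebra.contractLeft_algebraMap]
  | add x y hx hy => simp only [map_add, hx, hy, neg_add]
  | ι_mul x v hx =>
    have hv : eps k V (CliffordAlgebra.ι 0 v) = -CliffordAlgebra.ι 0 v := eps_ι v
    simp [CliffordAlgebra.contractLeft_ι_mul, hv, hx]

lemma contractLeft_comp_eps (τ : Module.Dual k V) :
    contractLeft τ ∘ₗ (eps k V).toLinearMap = -((eps k V).toLinearMap ∘ₗ contractLeft τ) :=
  LinearMap.ext fun x => by simp [eps_contractLeft]

lemma contractLeft_comp_mulLeft_ι (τ : Module.Dual k V) (v : V) :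
    contractLeft τ ∘ₗ mulLeft k (ι k v) = τ v • LinearMap.id - mulLeft k (ι k v) ∘ₗ contractLeft τ :=
  LinearMap.ext fun x => by simp [CliffordAlgebra.contractLeft_ι_mul]

lemma contractLeft_comp_contractLeft (σ τ : Module.Dual k V) :
    contractLeft τ ∘ₗ contractLeft σ
      = -(contractLeft σ ∘ₗ contractLeft τ : Module.End k (ExteriorAlgebra k V)) :=
  LinearMap.ext fun x => CliffordAlgebra.contractLeft_comm τ σ x

lemma dual_apply_mul_strs_mulLeft_ι_comp_contractLeft_symm (σ τ : Module.Dual k V) (v w : V) :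
    σ v * strs k V (mulLeft k (ι k w) ∘ₗ contractLeft τ)
      = σ w * strs k V (mulLeft k (ι k v) ∘ₗ contractLeft τ) := by
  simp only [strs]
  set E : Module.End k (ExteriorAlgebra k V) := (eps k V).toLinearMap
  have hE : ∀ X : Module.End k (ExteriorAlgebra k V),
      contractLeft σ ∘ₗ E ∘ₗ X = -(E ∘ₗ contractLeft σ ∘ₗ X) := fun X => by
    rw [← LinearMap.comp_assoc, contractLeft_comp_eps, LinearMap.neg_comp, LinearMap.comp_assoc]
  have hl : ∀ (u : V) (X : Module.End k (ExteriorAlgebra k V)),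
      contractLeft σ ∘ₗ mulLeft k (ι k u) ∘ₗ X
        = σ u • X - mulLeft k (ι k u) ∘ₗ contractLeft σ ∘ₗ X := fun u X => by
    rw [← LinearMap.comp_assoc, contractLeft_comp_mulLeft_ι, LinearMap.sub_comp,
      LinearMap.smul_comp, LinearMap.id_comp, LinearMap.comp_assoc]
  set X : Module.End k (ExteriorAlgebra k V) :=
    E ∘ₗ mulLeft k (ι k v) ∘ₗ mulLeft k (ι k w) ∘ₗ contractLeft τ
  have hcomm : contractLeft σ ∘ₗ X
      = σ w • (E ∘ₗ mulLeft k (ι k v) ∘ₗ contractLeft τ)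
        - σ v • (E ∘ₗ mulLeft k (ι k w) ∘ₗ contractLeft τ) + X ∘ₗ contractLeft σ := by
    rw [hE, hl, hl, contractLeft_comp_contractLeft]
    simp only [X, LinearMap.comp_sub, LinearMap.comp_smul, LinearMap.comp_neg,
      LinearMap.comp_assoc]
    abel
  have htrace : LinearMap.trace k (ExteriorAlgebra k V) (contractLeft σ ∘ₗ X)
      = LinearMap.trace k (ExteriorAlgebra k V) (X ∘ₗ contractLeft σ) :=
    LinearMap.trace_mul_comm k _ _
  rw [hcomm, map_add, map_sub, map_smul, map_smul, smul_eq_mul, smul_eq_mul] at htrace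
  linear_combination -htrace

lemma TrHom_one_apply_oneEquiv_symm (φ : Module.End k (ExteriorAlgebra k V)) (v : V) :
    TrHom k V 1 φ ((exteriorPower.oneEquiv k V).symm v) = -strs k V (mulLeft k (ι k v) ∘ₗ φ) := by
  simp [TrHom, exteriorPower.oneEquiv_symm_apply]

end Contraction

theorem generalized_supertrace_contraction_eq_zero
    [Module.Free k V] (r : ℕ) (hr : Module.finrank k V = r) (h2r : 2 ≤ r)
    (τ : Module.Dual k V) :
    TrHom k V 1
      (CliffordAlgebra.contractLeft (Q := (0 : QuadraticForm k V)) τ :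
        Module.End k (ExteriorAlgebra k V)) = 0 := by
  set S := (TrHom k V 1 (contractLeft τ)).comp (exteriorPower.oneEquiv k V).symm.toLinearMap
  have hS : S = 0 := Module.Dual.eq_zero_of_forall_mul_apply_symm (hr ▸ h2r) S fun σ v w => by
    simp only [S, LinearMap.comp_apply, LinearEquiv.coe_coe, TrHom_one_apply_oneEquiv_symm,
      mul_neg, dual_apply_mul_strs_mulLeft_ι_comp_contractLeft_symm σ τ v w]
  exact LinearMap.ext fun η => by
    simpa [S] using LinearMap.congr_fun hS (exteriorPower.oneEquiv k V η)
end

section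
/- Let k be a commutative ring and V a free k-module of finite rank r. Every k-linear superderivation δ of the exterior algebra ⋀V is of degree greater than or equal to −1; that is, δ(⋀^pV) ⊆ ⊕_{q ≥ p−1} ⋀^qV for every p ≥ 0 (equivalently, all homogeneous components of δ of degree ≤ −2 vanish). In particular δ(1) = 0, i.e., δ vanishes on ⋀^0V = k. -/
open ExteriorAlgebra

variable (k : Type*) [CommRing k] (V : Type*) [AddCommGroup V] [Module k V]

/-!
A superderivation `δ` kills `1` (apply the Leibniz rule to `1 * 1`), and on a product `v * y`
with `v ∈ V` it equals `δ v * y ± v * δ y`. As `⋀ V` is generated by `V`, induction on the degree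
of `y` shows that both terms have degree at least `deg y = deg (v * y) - 1`.
-/

section ExteriorPowerGE

variable {R M : Type*} [CommRing R] [AddCommGroup M] [Module R M]

noncomputable def exteriorPowerGE (n : ℕ) : Submodule R (ExteriorAlgebra R M) :=
  ⨆ q ∈ {q : ℕ | n ≤ q}, ⋀[R]^q M

theorem mem_exteriorPowerGE_of_mem {n q : ℕ} (h : n ≤ q) {x : ExteriorAlgebra R M}
    (hx : x ∈ ⋀[R]^q M) : x ∈ exteriorPowerGE n :=
  le_iSup₂ (f := fun q (_ : q ∈ {q : ℕ | n ≤ q}) => ⋀[R]^q M) q h hx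

theorem mem_exteriorPowerGE_zero (x : ExteriorAlgebra R M) : x ∈ exteriorPowerGE 0 := by
  have h_top : ⨆ i : ℕ, ⋀[R]^i M = ⊤ :=
    (DirectSum.Decomposition.isInternal (fun i : ℕ => ⋀[R]^i M)).submodule_iSup_eq_top
  have h_le : ⨆ i : ℕ, ⋀[R]^i M ≤ exteriorPowerGE 0 :=
    iSup_le fun q _ hy => mem_exteriorPowerGE_of_mem (Nat.zero_le q) hy
  exact h_le (h_top ▸ Submodule.mem_top)

theorem exteriorPowerGE_antitone : Antitone (exteriorPowerGE (R := R) (M := M)) :=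
  fun _ _ hnm => biSup_mono fun _ hq => le_trans hnm hq

theorem mul_mem_exteriorPowerGE {n j : ℕ} {a b : ExteriorAlgebra R M}
    (ha : a ∈ exteriorPowerGE n) (hb : b ∈ ⋀[R]^j M) : a * b ∈ exteriorPowerGE (n + j) := by
  suffices exteriorPowerGE n ≤ (exteriorPowerGE (n + j)).comap (LinearMap.mulRight R b) from
    this ha
  refine iSup₂_le fun q hq a ha => ?_
  exact mem_exteriorPowerGE_of_mem (Nat.add_le_add_right hq j) (SetLike.GradedMul.mul_mem ha hb)

theorem mul_mem_exteriorPowerGE' {n j : ℕ} {a b : ExteriorAlgebra R M}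
    (ha : a ∈ ⋀[R]^j M) (hb : b ∈ exteriorPowerGE n) : a * b ∈ exteriorPowerGE (j + n) := by
  suffices exteriorPowerGE n ≤ (exteriorPowerGE (j + n)).comap (LinearMap.mulLeft R a) from
    this hb
  refine iSup₂_le fun q hq b hb => ?_
  exact mem_exteriorPowerGE_of_mem (Nat.add_le_add_left hq j) (SetLike.GradedMul.mul_mem ha hb)

theorem biSup_exteriorPower_eq_exteriorPowerGE_sub_one (p : ℕ) :
    ⨆ q ∈ {q : ℕ | p ≤ q + 1}, ⋀[R]^q M = exteriorPowerGE (p - 1) := by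
  rw [exteriorPowerGE]
  congr! 3 with q
  simp only [Set.mem_ofPred_eq]
  omega

theorem ι_mem_exteriorPower_one (v : M) : ExteriorAlgebra.ι R v ∈ ⋀[R]^1 M := by
  rw [exteriorPower, pow_one]
  exact LinearMap.mem_range_self _ v

theorem map_mem_exteriorPowerGE_sub_one (δ : Module.End R (ExteriorAlgebra R M)) (s : R)
    (h1 : δ 1 = 0)
    (hι : ∀ v y, δ (ExteriorAlgebra.ι R v * y) =
      δ (ExteriorAlgebra.ι R v) * y + s • (ExteriorAlgebra.ι R v * δ y))
    {p : ℕ} {x : ExteriorAlgebra R M} (hx : x ∈ ⋀[R]^p M) :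
    δ x ∈ exteriorPowerGE (p - 1) := by
  induction hx using Submodule.pow_induction_on_left' with
  | algebraMap c =>
    rw [Algebra.algebraMap_eq_smul_one, map_smul, h1, smul_zero]
    exact zero_mem _
  | add x y i _ _ ihx ihy =>
    rw [map_add]
    exact add_mem ihx ihy
  | mem_mul m hm i x hx ih =>
    obtain ⟨v, rfl⟩ := hm
    have h_left : δ (ExteriorAlgebra.ι R v) * x ∈ exteriorPowerGE (0 + i) :=
      mul_mem_exteriorPowerGE (mem_exteriorPowerGE_zero _) hx
    have h_right : ExteriorAlgebra.ι R v * δ x ∈ exteriorPowerGE (1 + (i - 1)) :=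
      mul_mem_exteriorPowerGE' (ι_mem_exteriorPower_one v) ih
    rw [hι]
    refine add_mem ?_ (Submodule.smul_mem _ s ?_)
    · exact exteriorPowerGE_antitone (by omega) h_left
    · exact exteriorPowerGE_antitone (by omega) h_right

end ExteriorPowerGE

section Superderivation

variable {k V}

theorem one_mem_evenSub : (1 : ExteriorAlgebra k V) ∈ evenSub k V :=
  le_iSup (fun n : ℕ => ⋀[k]^(2 * n) V) 0 (by rw [mul_zero]; exact SetLike.GradedOne.one_mem)

theorem ι_mem_oddSub (v : V) : ExteriorAlgebra.ι k v ∈ oddSub k V :=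
  le_iSup (fun n : ℕ => ⋀[k]^(2 * n + 1) V) 0 (ι_mem_exteriorPower_one v)

theorem IsEvenDeriv.map_one {δ : Module.End k (ExteriorAlgebra k V)} (h : IsEvenDeriv k V δ) :
    δ 1 = 0 := by
  simpa using h.2 1 1

theorem IsOddDeriv.map_one {δ : Module.End k (ExteriorAlgebra k V)} (h : IsOddDeriv k V δ) :
    δ 1 = 0 := by
  simpa using h.2.1 1 one_mem_evenSub 1

theorem IsEvenDeriv.map_mem_exteriorPowerGE_sub_one {δ : Module.End k (ExteriorAlgebra k V)}
    (h : IsEvenDeriv k V δ) {p : ℕ} {x : ExteriorAlgebra k V} (hx : x ∈ ⋀[k]^p V) :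
    δ x ∈ exteriorPowerGE (p - 1) :=
  _root_.map_mem_exteriorPowerGE_sub_one δ 1 h.map_one
    (fun v y => by rw [one_smul]; exact h.2 _ _) hx

theorem IsOddDeriv.map_mem_exteriorPowerGE_sub_one {δ : Module.End k (ExteriorAlgebra k V)}
    (h : IsOddDeriv k V δ) {p : ℕ} {x : ExteriorAlgebra k V} (hx : x ∈ ⋀[k]^p V) :
    δ x ∈ exteriorPowerGE (p - 1) :=
  _root_.map_mem_exteriorPowerGE_sub_one δ (-1) h.map_one
    (fun v y => by rw [neg_one_smul, ← sub_eq_add_neg]; exact h.2.2 _ (ι_mem_oddSub v) y) hx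

end Superderivation

theorem superderivation_degree_ge_neg_one
    (δ : Module.End k (ExteriorAlgebra k V))
    (hδ : ∃ δ₀ δ₁, δ = δ₀ + δ₁ ∧ IsEvenDeriv k V δ₀ ∧ IsOddDeriv k V δ₁) :
    (∀ p : ℕ, ∀ x ∈ ⋀[k]^p V, δ x ∈ ⨆ q ∈ {q : ℕ | p ≤ q + 1}, ⋀[k]^q V) ∧
      δ 1 = 0 := by
  obtain ⟨δ₀, δ₁, rfl, hδ₀, hδ₁⟩ := hδ
  refine ⟨fun p x hx => ?_, by simp [hδ₀.map_one, hδ₁.map_one]⟩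
  rw [biSup_exteriorPower_eq_exteriorPowerGE_sub_one, LinearMap.add_apply]
  exact add_mem (hδ₀.map_mem_exteriorPowerGE_sub_one hx) (hδ₁.map_mem_exteriorPowerGE_sub_one hx)
end
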